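/- For a critical well-controlled branching random walk with λ* > 0 satisfying Λ'(λ*) = 0 and f(λ*) = log E[B], the maximum displacement R̄ = sup_{u ∈ T} S_u over all vertices of the tree satisfies P(R̄ ≥ k) ≤ e^{-λ* k} for all k ≥ 1. -/

import Mathlib

/-!
Union bound over first crossings. If some vertex of the tree reaches height `k`, then some
vertex reaches it for the first time along its line of descent, and that vertex is encoded by
the list of (child index, integer increment) pairs along this line. By independence, the
probability that a given pair list is realised is the product of the step weights
`w (a, b) = P(a < B) P(X = b)`, and by criticality the tilted weights `w (a, b) e^{λ* b}` have
total mass `E[B] E[e^{λ* X}] = 1`. A first-step analysis then shows that the total weight of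
the lists whose partial sums first reach level `k` is at most `e^{-λ* k}`.
-/

open MeasureTheory ProbabilityTheory Finset

/-- Nodes of the infinite Ulam–Harris tree: a node is a finite word of integers. -/
abbrev BRWNode := List ℕ

/-- `u` belongs to the Galton–Watson tree determined by the offspring counts `B`. -/
def BRWmem {Ω : Type*} (B : BRWNode → Ω → ℕ) (u : BRWNode) (ω : Ω) : Prop :=
  ∀ k, (h : k < u.length) → u.get ⟨k, h⟩ < B (u.take k) ω

/-- The displacement of node `u` in the branching random walk. -/
def BRWpos {Ω : Type*} (X : BRWNode → Ω → ℝ) (u : BRWNode) (ω : Ω) : ℝ :=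
  ∑ k ∈ range u.length, X (u.take (k + 1)) ω

open scoped ENNReal

/-- The partial sums of `s` along `p` stay below `k` on every proper prefix of `p` and reach `k`
on `p` itself. -/
def FirstCrossing {β : Type*} (s : β → ℝ) : ℝ → List β → Prop
  | k, [] => k ≤ 0
  | k, x :: p => 0 < k ∧ FirstCrossing s (k - s x) p

section FirstCrossing

variable {β : Type*}

lemma exists_firstCrossing_take (s : β → ℝ) (p : List β) {k : ℝ} (hk : k ≤ (p.map s).sum) :
    ∃ j, FirstCrossing s k (p.take j) := by
  induction p generalizing k with
  | nil => exact ⟨0, by simpa [FirstCrossing] using hk⟩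
  | cons x p ih =>
    rcases le_or_gt k 0 with hk0 | hk0
    · exact ⟨0, hk0⟩
    · rw [List.map_cons, List.sum_cons] at hk
      obtain ⟨j, hj⟩ := ih (k := k - s x) (by linarith)
      exact ⟨j + 1, hk0, hj⟩

variable {s : β → ℝ}

lemma FirstCrossing.eq_nil_of_nonpos {k : ℝ} {p : List β} (h : FirstCrossing s k p)
    (hk : k ≤ 0) : p = [] := by
  cases p with
  | nil => rfl
  | cons x p => exact absurd h.1 hk.not_gt

variable {w : β → ℝ≥0∞} {lam : ℝ}

lemma tsum_firstCrossing_of_length_le_le (hlam : 0 ≤ lam)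
    (hw : ∑' x, w x * ENNReal.ofReal (Real.exp (lam * s x)) ≤ 1) (n : ℕ) (k : ℝ) :
    ∑' p : List β, {p | FirstCrossing s k p ∧ p.length ≤ n}.indicator (fun p => (p.map w).prod) p
      ≤ ENNReal.ofReal (Real.exp (-(lam * k))) := by
  have h_nonpos : ∀ n k, k ≤ 0 → ∑' p : List β, {p | FirstCrossing s k p ∧ p.length ≤ n}.indicator
      (fun p => (p.map w).prod) p ≤ ENNReal.ofReal (Real.exp (-(lam * k))) := by
    intro n k hk
    rw [tsum_eq_single [] fun p hp =>
      Set.indicator_of_notMem (fun h => hp (h.1.eq_nil_of_nonpos hk)) _]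
    calc _ ≤ ([].map w).prod := Set.indicator_le_self _ (fun p : List β => (p.map w).prod) _
      _ = 1 := rfl
      _ ≤ ENNReal.ofReal (Real.exp (-(lam * k))) :=
        ENNReal.one_le_ofReal.2 (Real.one_le_exp (by nlinarith))
  induction n generalizing k with
  | zero =>
    rcases le_or_gt k 0 with hk | hk
    · exact h_nonpos 0 k hk
    refine le_of_eq_of_le (ENNReal.tsum_eq_zero.2 fun p => Set.indicator_of_notMem ?_ _) zero_le
    rintro ⟨hp, hlen⟩
    rw [List.length_eq_zero_iff.1 (Nat.le_zero.1 hlen)] at hp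
    exact hk.not_ge hp
  | succ n ih =>
    rcases le_or_gt k 0 with hk | hk
    · exact h_nonpos _ k hk
    have hsupp : Function.support ({p | FirstCrossing s k p ∧ p.length ≤ n + 1}.indicator
        (fun p => (p.map w).prod)) ⊆ Set.range (fun q : β × List β => q.1 :: q.2) := by
      rintro (_ | ⟨x, p⟩) hp
      · exact absurd (Set.indicator_of_notMem (fun h => (hk.not_ge h.1)) _) hp
      · exact ⟨(x, p), rfl⟩
    have hcons : Function.Injective (fun q : β × List β => q.1 :: q.2) :=
      fun q q' h => Prod.ext (List.cons.inj h).1 (List.cons.inj h).2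
    rw [← hcons.tsum_eq hsupp, ENNReal.tsum_prod']
    calc ∑' x, ∑' p, _
        = ∑' x, w x * ∑' p : List β, {p | FirstCrossing s (k - s x) p ∧ p.length ≤ n}.indicator
            (fun p => (p.map w).prod) p := by
          refine tsum_congr fun x => ?_
          rw [← ENNReal.tsum_mul_left]
          refine tsum_congr fun p => ?_
          have hmem : x :: p ∈ {p | FirstCrossing s k p ∧ p.length ≤ n + 1} ↔
              p ∈ {p | FirstCrossing s (k - s x) p ∧ p.length ≤ n} := by
            simp [FirstCrossing, hk]
          by_cases hp : p ∈ {p | FirstCrossing s (k - s x) p ∧ p.length ≤ n}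
          · rw [Set.indicator_of_mem (hmem.2 hp), Set.indicator_of_mem hp]; rfl
          · rw [Set.indicator_of_notMem (mt hmem.1 hp), Set.indicator_of_notMem hp, mul_zero]
      _ ≤ ∑' x, w x * ENNReal.ofReal (Real.exp (-(lam * (k - s x)))) :=
          ENNReal.tsum_le_tsum fun x => by gcongr; exact ih _
      _ = ENNReal.ofReal (Real.exp (-(lam * k))) *
            ∑' x, w x * ENNReal.ofReal (Real.exp (lam * s x)) := by
          rw [← ENNReal.tsum_mul_left]
          refine tsum_congr fun x => ?_
          rw [mul_left_comm, ← ENNReal.ofReal_mul (Real.exp_nonneg _), ← Real.exp_add]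
          ring_nf
      _ ≤ ENNReal.ofReal (Real.exp (-(lam * k))) := mul_le_of_le_one_right' hw

lemma tsum_firstCrossing_le (hlam : 0 ≤ lam)
    (hw : ∑' x, w x * ENNReal.ofReal (Real.exp (lam * s x)) ≤ 1) (k : ℝ) :
    ∑' p : List β, {p | FirstCrossing s k p}.indicator (fun p => (p.map w).prod) p
      ≤ ENNReal.ofReal (Real.exp (-(lam * k))) := by
  classical
  refine ENNReal.tsum_eq_iSup_sum ▸ iSup_le fun t => ?_
  calc ∑ p ∈ t, {p | FirstCrossing s k p}.indicator (fun p => (p.map w).prod) p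
      = ∑ p ∈ t, {p | FirstCrossing s k p ∧ p.length ≤ t.sup List.length}.indicator
          (fun p => (p.map w).prod) p := by
        refine Finset.sum_congr rfl fun p hp => ?_
        have hlen : p.length ≤ t.sup List.length := Finset.le_sup (f := List.length) hp
        simp [Set.indicator_apply, hlen]
    _ ≤ _ := ENNReal.sum_le_tsum t
    _ ≤ _ := tsum_firstCrossing_of_length_le_le hlam hw _ k

end FirstCrossing

section Lintegral

variable {Ω : Type*} [MeasurableSpace Ω] {μ : Measure Ω}

lemma tsum_indicator_Iio_one (b : ℕ) :
    ∑' a : ℕ, (Set.Iio b).indicator (1 : ℕ → ℝ≥0∞) a = b := by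
  rw [← _root_.tsum_subtype]
  simp only [Pi.one_apply]
  rw [ENNReal.tsum_set_one, ← Finset.coe_range, Set.encard_coe_eq_coe_finsetCard,
    Finset.card_range, ENat.toENNReal_coe]

lemma lintegral_natCast_eq_tsum_measure_lt {N : Ω → ℕ} (hN : Measurable N) :
    ∫⁻ ω, (N ω : ℝ≥0∞) ∂μ = ∑' a : ℕ, μ {ω | a < N ω} := by
  have hmeas : ∀ a : ℕ, MeasurableSet {ω | a < N ω} :=
    fun a => hN (Set.to_countable _).measurableSet
  calc ∫⁻ ω, (N ω : ℝ≥0∞) ∂μ = ∫⁻ ω, ∑' a : ℕ, {ω | a < N ω}.indicator 1 ω ∂μ :=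
        lintegral_congr fun ω => (tsum_indicator_Iio_one (N ω)).symm
    _ = ∑' a : ℕ, μ {ω | a < N ω} := by
        rw [lintegral_tsum fun a => (measurable_one.indicator (hmeas a)).aemeasurable]
        simp_rw [Pi.one_def, lintegral_indicator_const (hmeas _), one_mul]

lemma lintegral_comp_eq_tsum_of_ae_intCast {Y : Ω → ℝ} (hY : Measurable Y)
    (hlat : ∀ᵐ ω ∂μ, ∃ z : ℤ, Y ω = z) (g : ℝ → ℝ≥0∞) :
    ∫⁻ ω, g (Y ω) ∂μ = ∑' z : ℤ, g z * μ {ω | Y ω = z} := by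
  have hmeas : ∀ z : ℤ, MeasurableSet {ω | Y ω = z} :=
    fun z => hY (measurableSet_singleton _)
  calc ∫⁻ ω, g (Y ω) ∂μ = ∫⁻ ω, ∑' z : ℤ, {ω | Y ω = z}.indicator (fun _ => g z) ω ∂μ := by
        refine lintegral_congr_ae ?_
        filter_upwards [hlat] with ω ⟨z, hz⟩
        rw [tsum_eq_single z fun z' hz' => Set.indicator_of_notMem
          (fun h => hz' (Int.cast_injective (h.symm.trans hz))) _]
        rw [Set.indicator_of_mem (show ω ∈ {ω | Y ω = z} from hz), hz]
    _ = ∑' z : ℤ, g z * μ {ω | Y ω = z} := by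
        rw [lintegral_tsum fun z => (measurable_const.indicator (hmeas z)).aemeasurable]
        simp_rw [lintegral_indicator_const (hmeas _)]

end Lintegral

section StepWeight

variable {Ω : Type*} [MeasurableSpace Ω] (μ : Measure Ω)

noncomputable def stepWeight (N : Ω → ℕ) (Y : Ω → ℝ) (x : ℕ × ℤ) : ℝ≥0∞ :=
  μ {ω | x.1 < N ω} * μ {ω | Y ω = x.2}

lemma tsum_stepWeight_mul_exp {N : Ω → ℕ} {Y : Ω → ℝ} (hN : Measurable N) (hY : Measurable Y)
    (hNint : Integrable (fun ω => (N ω : ℝ)) μ) (hlat : ∀ᵐ ω ∂μ, ∃ z : ℤ, Y ω = z) {lam : ℝ}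
    (hexp : Integrable (fun ω => Real.exp (lam * Y ω)) μ) :
    ∑' x, stepWeight μ N Y x * ENNReal.ofReal (Real.exp (lam * x.2)) =
      ENNReal.ofReal ((∫ ω, (N ω : ℝ) ∂μ) * ∫ ω, Real.exp (lam * Y ω) ∂μ) := by
  have hN0 : 0 ≤ ∫ ω, (N ω : ℝ) ∂μ := integral_nonneg fun ω => Nat.cast_nonneg _
  rw [ENNReal.ofReal_mul hN0,
    ofReal_integral_eq_lintegral_ofReal hNint (.of_forall fun ω => Nat.cast_nonneg _),
    ofReal_integral_eq_lintegral_ofReal hexp (.of_forall fun ω => (Real.exp_pos _).le)]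
  simp_rw [ENNReal.ofReal_natCast]
  rw [lintegral_natCast_eq_tsum_measure_lt hN,
    lintegral_comp_eq_tsum_of_ae_intCast hY hlat (fun y => ENNReal.ofReal (Real.exp (lam * y))),
    ENNReal.tsum_prod', ← ENNReal.tsum_mul_right]
  refine tsum_congr fun a => ?_
  rw [← ENNReal.tsum_mul_left]
  refine tsum_congr fun z => ?_
  simp only [stepWeight]
  ring

end StepWeight

section PathEvent

variable {Ω : Type*} (B : BRWNode → Ω → ℕ) (X : BRWNode → Ω → ℝ)

/-- The `i`-th entry of `q` is the child index chosen in generation `i` and the increment of the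
walk on that edge: the node `q.map Prod.fst` belongs to the tree and its walk makes exactly the
steps `q.map Prod.snd`. -/
def pathEvent (q : List (ℕ × ℤ)) : Set Ω :=
  {ω | ∀ i : Fin q.length, q[i].1 < B ((q.map Prod.fst).take i) ω ∧
    X ((q.map Prod.fst).take (i + 1)) ω = q[i].2}

lemma exists_firstCrossing_mem_pathEvent {ω : Ω} (hω : ∀ v, ∃ z : ℤ, X v ω = z)
    {u : BRWNode} (hu : BRWmem B u ω) {k : ℝ} (hk : k ≤ BRWpos X u ω) :
    ∃ q, FirstCrossing (fun x : ℕ × ℤ => (x.2 : ℝ)) k q ∧ ω ∈ pathEvent B X q := by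
  choose z hz using hω
  let q := List.ofFn fun i : Fin u.length => (u[i], z (u.take (i + 1)))
  have hfst : q.map Prod.fst = u := by simp [q, List.map_ofFn, Function.comp_def]
  have hsum : (q.map fun x => (x.2 : ℝ)).sum = BRWpos X u ω := by
    simp [q, List.map_ofFn, List.sum_ofFn, BRWpos, ← hz,
      Fin.sum_univ_eq_sum_range (fun i => X (u.take (i + 1)) ω)]
  obtain ⟨j, hj⟩ := exists_firstCrossing_take _ q (hk.trans hsum.ge)
  refine ⟨q.take j, hj, fun i => ?_⟩
  have hi : (i : ℕ) < j ∧ (i : ℕ) < u.length := by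
    simpa [q] using i.isLt
  simp only [List.map_take, hfst, List.take_take, min_eq_left hi.1.le,
    min_eq_left (Nat.succ_le_of_lt hi.1)]
  simp only [q, Fin.getElem_fin, List.getElem_take, List.getElem_ofFn]
  exact ⟨hu i hi.2, hz _⟩

variable [MeasurableSpace Ω] (μ : Measure Ω)

lemma ae_forall_exists_intCast (hXmeas : ∀ u, Measurable (X u))
    (hXident : ∀ u, μ.map (X u) = μ.map (X [0])) (hlat : ∀ᵐ ω ∂μ, ∃ z : ℤ, X [0] ω = z) :
    ∀ᵐ ω ∂μ, ∀ v, ∃ z : ℤ, X v ω = z := by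
  refine ae_all_iff.2 fun v => ?_
  have hident : IdentDistrib (X [0]) (X v) μ μ :=
    ⟨(hXmeas _).aemeasurable, (hXmeas _).aemeasurable, (hXident v).symm⟩
  simpa [eq_comm] using hident.ae_mem_snd (Set.countable_range ((↑) : ℤ → ℝ)).measurableSet
    (by simpa [eq_comm] using hlat)

lemma measure_pathEvent_eq_prod
    (hindep : iIndepFun (Sum.elim (fun u ω => (B u ω : ℝ)) X) μ) (q : List (ℕ × ℤ)) :
    μ (pathEvent B X q) = ∏ i : Fin q.length,
      μ {ω | q[i].1 < B ((q.map Prod.fst).take i) ω} *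
      μ {ω | X ((q.map Prod.fst).take (i + 1)) ω = q[i].2} := by
  set u := q.map Prod.fst
  have hlen : ∀ j ≤ q.length, (u.take j).length = j := fun j hj => by simpa [u] using hj
  let g : Fin q.length ⊕ Fin q.length → BRWNode ⊕ BRWNode :=
    Sum.map (fun i => u.take i) (fun i => u.take (i + 1))
  have hg : Function.Injective g := by
    refine Function.Injective.sumMap (fun i j h => ?_) (fun i j h => ?_)
    · have := congrArg List.length h
      rwa [hlen i i.isLt.le, hlen j j.isLt.le, Fin.val_inj] at this
    · have := congrArg List.length h
      rwa [hlen _ i.isLt, hlen _ j.isLt, Nat.succ_inj, Fin.val_inj] at this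
  let sets : Fin q.length ⊕ Fin q.length → Set ℝ :=
    Sum.elim (fun i => Set.Ioi (q[i].1 : ℝ)) (fun i => {(q[i].2 : ℝ)})
  have hsets : ∀ j ∈ (Finset.univ : Finset _), MeasurableSet (sets j) := by
    rintro (i | i) -
    exacts [measurableSet_Ioi, measurableSet_singleton _]
  have hevent : pathEvent B X q = ⋂ j ∈ (Finset.univ : Finset _),
      Sum.elim (fun u ω => (B u ω : ℝ)) X (g j) ⁻¹' sets j := by
    ext ω
    simp [pathEvent, g, sets, u, forall_and]
  rw [hevent, (hindep.precomp hg).measure_inter_preimage_eq_mul Finset.univ hsets,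
    Fintype.prod_sum_type, ← Finset.prod_mul_distrib]
  refine Finset.prod_congr rfl fun i _ => ?_
  congr 2
  ext ω
  simp [g, sets]

lemma measure_pathEvent (hBmeas : ∀ u, Measurable (B u)) (hXmeas : ∀ u, Measurable (X u))
    (hindep : iIndepFun (Sum.elim (fun u ω => (B u ω : ℝ)) X) μ)
    (hBident : ∀ u, μ.map (B u) = μ.map (B [])) (hXident : ∀ u, μ.map (X u) = μ.map (X [0]))
    (q : List (ℕ × ℤ)) :
    μ (pathEvent B X q) = (q.map (stepWeight μ (B []) (X [0]))).prod := by
  rw [measure_pathEvent_eq_prod B X μ hindep, ← Fin.prod_univ_fun_getElem]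
  refine Finset.prod_congr rfl fun i _ => ?_
  congr 1
  · exact IdentDistrib.measure_mem_eq
      ⟨(hBmeas _).aemeasurable, (hBmeas _).aemeasurable, hBident _⟩
      (Set.to_countable _).measurableSet
  · exact IdentDistrib.measure_mem_eq
      ⟨(hXmeas _).aemeasurable, (hXmeas _).aemeasurable, hXident _⟩
      (measurableSet_singleton _)

end PathEvent

theorem brw_max_upper_tail_general {Ω : Type*} [MeasurableSpace Ω] (μ : Measure Ω)
    [IsProbabilityMeasure μ]
    (B : BRWNode → Ω → ℕ) (X : BRWNode → Ω → ℝ)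
    (hBmeas : ∀ u, Measurable (B u)) (hXmeas : ∀ u, Measurable (X u))
    (hindep : iIndepFun
      (Sum.elim (fun u ω => ((B u ω : ℝ))) X) μ)
    (hBident : ∀ u, μ.map (B u) = μ.map (B []))
    (hXident : ∀ u, μ.map (X u) = μ.map (X [0]))
    (hBint : Integrable (fun ω => (B [] ω : ℝ)) μ)
    (hBsup : 1 < ∫ ω, (B [] ω : ℝ) ∂μ)
    (hlat : ∀ᵐ ω ∂μ, ∃ z : ℤ, X [0] ω = z)
    (Λ : ℝ → ℝ) (hΛ : ∀ t, Λ t = Real.log (∫ ω, Real.exp (t * X [0] ω) ∂μ))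
    (lam : ℝ) (hlam : 0 < lam)
    (ε : ℝ) (hε : 0 < ε)
    (hdom : ∀ t : ℝ, |t - lam| < ε → Integrable (fun ω => Real.exp (t * X [0] ω)) μ)
    (hcrit : -Λ lam = Real.log (∫ ω, (B [] ω : ℝ) ∂μ)) :
    ∀ k : ℕ, 1 ≤ k →
      μ {ω | ∃ u, BRWmem B u ω ∧ (k : ℝ) ≤ BRWpos X u ω} ≤
        ENNReal.ofReal (Real.exp (-(lam * k))) := by
  intro k _
  have hexp : Integrable (fun ω => Real.exp (lam * X [0] ω)) μ := hdom lam (by simpa using hε)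
  have hmean : (∫ ω, (B [] ω : ℝ) ∂μ) * ∫ ω, Real.exp (lam * X [0] ω) ∂μ = 1 := by
    have hM : 0 < ∫ ω, Real.exp (lam * X [0] ω) ∂μ := integral_exp_pos hexp
    refine Real.eq_one_of_pos_of_log_eq_zero (mul_pos (by linarith) hM) ?_
    rw [Real.log_mul (by linarith) hM.ne', ← hcrit, hΛ]
    ring
  have hw : ∑' x, stepWeight μ (B []) (X [0]) x * ENNReal.ofReal (Real.exp (lam * x.2)) ≤ 1 := by
    rw [tsum_stepWeight_mul_exp μ (hBmeas []) (hXmeas [0]) hBint hlat hexp, hmean,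
      ENNReal.ofReal_one]
  let C := {q : List (ℕ × ℤ) | FirstCrossing (fun x => (x.2 : ℝ)) k q}
  calc μ {ω | ∃ u, BRWmem B u ω ∧ (k : ℝ) ≤ BRWpos X u ω}
      ≤ μ (⋃ q ∈ C, pathEvent B X q) := by
        refine measure_mono_ae ?_
        filter_upwards [ae_forall_exists_intCast X μ hXmeas hXident hlat] with ω hω ⟨u, hu, hk⟩
        obtain ⟨q, hq, hωq⟩ := exists_firstCrossing_mem_pathEvent B X hω hu hk
        exact Set.mem_biUnion hq hωq
    _ ≤ ∑' q : C, μ (pathEvent B X q) := measure_biUnion_le μ C.to_countable _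
    _ = ∑' q, C.indicator (fun q => (q.map (stepWeight μ (B []) (X [0]))).prod) q := by
        simp_rw [measure_pathEvent B X μ hBmeas hXmeas hindep hBident hXident]
        exact _root_.tsum_subtype C fun q => (q.map (stepWeight μ (B []) (X [0]))).prod
    _ ≤ ENNReal.ofReal (Real.exp (-(lam * k))) := tsum_firstCrossing_le hlam.le hw k

/-- For a critical well-controlled branching random walk, the maximum displacement
`R̄ = sup_{u ∈ T} S_u` over all vertices of the tree satisfies
`P(R̄ ≥ k) ≤ e^{-λ* k}` for all `k ≥ 1`. -/
theorem brw_max_upper_tail {Ω : Type*} [MeasurableSpace Ω] (μ : Measure Ω)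
    [IsProbabilityMeasure μ]
    (B : BRWNode → Ω → ℕ) (X : BRWNode → Ω → ℝ)
    (hBmeas : ∀ u, Measurable (B u)) (hXmeas : ∀ u, Measurable (X u))
    (hindep : iIndepFun
      (Sum.elim (fun u ω => ((B u ω : ℝ))) X) μ)
    (hBident : ∀ u, μ.map (B u) = μ.map (B []))
    (hXident : ∀ u, μ.map (X u) = μ.map (X [0]))
    (hBint : Integrable (fun ω => (B [] ω : ℝ)) μ)
    (hBsup : 1 < ∫ ω, (B [] ω : ℝ) ∂μ)
    (hlat : ∀ᵐ ω ∂μ, ∃ z : ℤ, X [0] ω = z)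
    (Λ : ℝ → ℝ) (hΛ : ∀ t, Λ t = Real.log (∫ ω, Real.exp (t * X [0] ω) ∂μ))
    (lam : ℝ) (hlam : 0 < lam)
    (ε : ℝ) (hε : 0 < ε)
    (hdom : ∀ t : ℝ, |t - lam| < ε → Integrable (fun ω => Real.exp (t * X [0] ω)) μ)
    (hderiv : HasDerivAt Λ 0 lam)
    (hcrit : -Λ lam = Real.log (∫ ω, (B [] ω : ℝ) ∂μ)) :
    ∀ k : ℕ, 1 ≤ k →
      μ {ω | ∃ u, BRWmem B u ω ∧ (k : ℝ) ≤ BRWpos X u ω} ≤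
        ENNReal.ofReal (Real.exp (-(lam * k))) :=
  brw_max_upper_tail_general μ B X hBmeas hXmeas hindep hBident hXident hBint hBsup hlat Λ hΛ lam
    hlam ε hε hdom hcrit
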